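/- Let g_rd and g_sd be independent exponential random variables with means π_rd > 0 and π_sd > 0, respectively. Fix P_s, P_r > 0, 0 ≤ C < 1, r > 0, set γ = 2^{2r} − 1 and Q = Ψ_γ(C)/(P_r·π_rd·(1 − C²)). Then P[(P_r·g_rd + P_s·g_sd + 1)² − (P_r·g_rd·C)² < 2^{2r}·(P_s·g_sd + 1)²] = 1 − e^{−Q} / (P_s·π_sd·Q + 1). -/

import Mathlib

/-!
Multiplying the event by `1 - C²` completes a square: with `b = P_s g_sd + 1` it reads
`(P_r g_rd (1 - C²) + b)² < b² (1 + γ (1 - C²))`, i.e. `g_rd < Q π_rd b`. Given `g_sd`, the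
exponential tail of `g_rd` beyond that threshold is `e^{-Q b}`, and averaging over `g_sd` is a
Laplace transform of the exponential law: `E e^{-Q P_s g_sd} = 1 / (1 + Q P_s π_sd)`.
-/

open MeasureTheory ProbabilityTheory Real

/-- `Psi γ x = √(1 + γ(1 - x²)) - 1`. -/
noncomputable def Psi (γ x : ℝ) : ℝ := Real.sqrt (1 + γ * (1 - x ^ 2)) - 1

/-- The exponential law with mean `mean`, given by its density `(1/mean) e^(-x/mean)` on `[0, ∞)`. -/
noncomputable def expLaw (mean : ℝ) : Measure ℝ :=
  volume.withDensity fun x =>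
    ENNReal.ofReal (if 0 ≤ x then (1 / mean) * Real.exp (-x / mean) else 0)

open Set ENNReal

lemma expMeasure_eq_withDensity (r : ℝ) : expMeasure r = volume.withDensity (exponentialPDF r) :=
  rfl

lemma measurable_exponentialPDF (r : ℝ) : Measurable (exponentialPDF r) :=
  (measurable_exponentialPDFReal r).ennreal_ofReal

lemma expLaw_eq_expMeasure (m : ℝ) : expLaw m = expMeasure m⁻¹ := by
  rw [expLaw, expMeasure_eq_withDensity]
  congr 1
  funext x
  rw [exponentialPDF_eq, one_div, neg_div, div_eq_inv_mul]

lemma ae_nonneg_expMeasure (r : ℝ) : ∀ᵐ x ∂expMeasure r, 0 ≤ x := by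
  simp only [ae_iff, not_le]
  change expMeasure r (Iio 0) = 0
  rw [expMeasure_eq_withDensity, withDensity_apply _ measurableSet_Iio]
  exact lintegral_exponentialPDF_of_nonpos le_rfl

lemma expMeasure_Iio {r c : ℝ} (hr : 0 < r) (hc : 0 ≤ c) :
    expMeasure r (Iio c) = ENNReal.ofReal (1 - exp (-(r * c))) := by
  have := isProbabilityMeasure_expMeasure hr
  have : NullSingletonClass (expMeasure r) :=
    inferInstanceAs (NullSingletonClass (volume.withDensity _))
  rw [measure_congr Iio_ae_eq_Iic, ← ofReal_cdf, cdf_expMeasure_eq hr, if_pos hc]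

lemma expMeasure_Ici {r c : ℝ} (hr : 0 < r) (hc : 0 ≤ c) :
    expMeasure r (Ici c) = ENNReal.ofReal (exp (-(r * c))) := by
  have := isProbabilityMeasure_expMeasure hr
  have hexp : exp (-(r * c)) ≤ 1 := exp_le_one_iff.2 (by nlinarith)
  rw [← compl_Iio, prob_compl_eq_one_sub measurableSet_Iio, expMeasure_Iio hr hc,
    ENNReal.ofReal_sub _ (exp_pos _).le, ENNReal.ofReal_one,
    ENNReal.sub_sub_cancel one_ne_top (ofReal_le_one.2 hexp)]

lemma exponentialPDF_mul_exp {r t : ℝ} (hr : 0 ≤ r) (hrt : 0 < r + t) (y : ℝ) :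
    exponentialPDF r y * ENNReal.ofReal (exp (-(t * y)))
      = ENNReal.ofReal (r / (r + t)) * exponentialPDF (r + t) y := by
  rcases lt_or_ge y 0 with hy | hy
  · simp [exponentialPDF_of_neg hy]
  · rw [exponentialPDF_of_nonneg hy, exponentialPDF_of_nonneg hy,
      ← ENNReal.ofReal_mul (by positivity), ← ENNReal.ofReal_mul (by positivity)]
    congr 1
    rw [← mul_assoc, div_mul_cancel₀ _ hrt.ne', mul_assoc, ← exp_add]
    ring_nf

lemma lintegral_exp_neg_mul_expMeasure {r t : ℝ} (hr : 0 ≤ r) (hrt : 0 < r + t) :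
    ∫⁻ y, ENNReal.ofReal (exp (-(t * y))) ∂expMeasure r = ENNReal.ofReal (r / (r + t)) := by
  rw [expMeasure_eq_withDensity,
    lintegral_withDensity_eq_lintegral_mul _ (measurable_exponentialPDF r) (by fun_prop)]
  simp only [Pi.mul_apply, exponentialPDF_mul_exp hr hrt]
  rw [lintegral_const_mul _ (measurable_exponentialPDF _), lintegral_exponentialPDF_eq_one hrt,
    mul_one]

lemma Psi_nonneg {γ x : ℝ} (hγ : 0 ≤ γ) (hx : x ^ 2 ≤ 1) : 0 ≤ Psi γ x :=
  sub_nonneg.2 (one_le_sqrt.2 (le_add_of_nonneg_right (mul_nonneg hγ (sub_nonneg.2 hx))))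

lemma add_sq_sub_sq_lt_iff_lt_mul_Psi {a b C γ : ℝ} (ha : 0 ≤ a) (hb : 0 ≤ b) (hC : C ^ 2 < 1)
    (hγ : 0 ≤ 1 + γ * (1 - C ^ 2)) :
    (a + b) ^ 2 - (a * C) ^ 2 < (1 + γ) * b ^ 2 ↔ a * (1 - C ^ 2) < b * Psi γ C := by
  have hc : 0 < 1 - C ^ 2 := sub_pos.2 hC
  have key : (1 - C ^ 2) * ((a + b) ^ 2 - (a * C) ^ 2 - (1 + γ) * b ^ 2)
      = (a * (1 - C ^ 2) + b) ^ 2 - (b * √(1 + γ * (1 - C ^ 2))) ^ 2 := by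
    rw [mul_pow b, sq_sqrt hγ]; ring
  rw [← sub_neg, ← smul_neg_iff_of_pos_left hc, smul_eq_mul, key, sub_neg,
    pow_lt_pow_iff_left₀ (by positivity) (by positivity) two_ne_zero, Psi, mul_sub_one,
    lt_sub_iff_add_lt]

lemma prod_expMeasure_eq_lintegral {a : ℝ} (ha : 0 < a) (ν : Measure ℝ) [SFinite ν]
    {S : Set (ℝ × ℝ)} (hS : MeasurableSet S) {c : ℝ → ℝ}
    (hc : ∀ᵐ y ∂ν, 0 ≤ c y ∧ ∀ x, 0 ≤ x → ((x, y) ∈ S ↔ c y ≤ x)) :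
    (expMeasure a).prod ν S = ∫⁻ y, ENNReal.ofReal (exp (-(a * c y))) ∂ν := by
  have := isProbabilityMeasure_expMeasure ha
  rw [Measure.prod_apply_symm hS]
  refine lintegral_congr_ae (hc.mono fun y ⟨hcy, hy⟩ => ?_)
  dsimp only
  rw [← expMeasure_Ici ha hcy]
  exact measure_congr ((ae_nonneg_expMeasure a).mono fun x hx => propext (hy x hx))

lemma not_lt_iff_threshold_le {P_r P_s C γ x y : ℝ} (hP_r : 0 < P_r) (hP_s : 0 ≤ P_s)
    (hC : C ^ 2 < 1) (hγ : 0 ≤ 1 + γ * (1 - C ^ 2)) (hx : 0 ≤ x) (hy : 0 ≤ y) :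
    ¬ (P_r * x + P_s * y + 1) ^ 2 - (P_r * x * C) ^ 2 < (1 + γ) * (P_s * y + 1) ^ 2
      ↔ Psi γ C / (P_r * (1 - C ^ 2)) * (P_s * y + 1) ≤ x := by
  have hc : 0 < 1 - C ^ 2 := sub_pos.2 hC
  rw [add_assoc, add_sq_sub_sq_lt_iff_lt_mul_Psi (by positivity) (by positivity) hC hγ, not_lt,
    div_mul_eq_mul_div, div_le_iff₀ (by positivity)]
  constructor <;> intro h <;> linarith

lemma prod_expMeasure_compl_sq_sub_sq_lt {m_rd m_sd P_r P_s C γ Q : ℝ} (hm_rd : 0 < m_rd)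
    (hm_sd : 0 < m_sd) (hP_r : 0 < P_r) (hP_s : 0 ≤ P_s) (hC : C ^ 2 < 1) (hγ : 0 ≤ γ)
    (hQ : Q = Psi γ C / (P_r * m_rd * (1 - C ^ 2))) :
    ((expMeasure m_rd⁻¹).prod (expMeasure m_sd⁻¹)).real
        {p : ℝ × ℝ | (P_r * p.1 + P_s * p.2 + 1) ^ 2 - (P_r * p.1 * C) ^ 2
          < (1 + γ) * (P_s * p.2 + 1) ^ 2}ᶜ
      = exp (-Q) * (m_sd⁻¹ / (m_sd⁻¹ + Q * P_s)) := by
  have hc : 0 < 1 - C ^ 2 := sub_pos.2 hC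
  have hQ0 : 0 ≤ Q := hQ ▸ div_nonneg (Psi_nonneg hγ hC.le) (by positivity)
  have hthreshold : Q * m_rd = Psi γ C / (P_r * (1 - C ^ 2)) := by rw [hQ]; field_simp
  have := isProbabilityMeasure_expMeasure (inv_pos.2 hm_sd)
  rw [measureReal_def, prod_expMeasure_eq_lintegral (inv_pos.2 hm_rd) _
    (measurableSet_lt (by fun_prop) (by fun_prop)).compl (c := fun y => Q * m_rd * (P_s * y + 1))]
  · have hexp (y : ℝ) : exp (-(m_rd⁻¹ * (Q * m_rd * (P_s * y + 1))))
        = exp (-Q) * exp (-(Q * P_s * y)) := by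
      rw [← exp_add]; field_simp; ring_nf
    simp_rw [hexp, ENNReal.ofReal_mul (exp_pos _).le]
    rw [lintegral_const_mul _ (by fun_prop),
      lintegral_exp_neg_mul_expMeasure (by positivity) (by positivity), ← ENNReal.ofReal_mul
      (exp_pos _).le, ENNReal.toReal_ofReal (by positivity)]
  · filter_upwards [ae_nonneg_expMeasure _] with y hy
    refine ⟨by positivity, fun x hx => ?_⟩
    rw [hthreshold, ← not_lt_iff_threshold_le hP_r hP_s hC (by nlinarith) hx hy]
    rfl

theorem stmt_5
    {Ω : Type*} [MeasurableSpace Ω] (μ : Measure Ω) [IsProbabilityMeasure μ]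
    (g_rd g_sd : Ω → ℝ) (hg_rd : Measurable g_rd) (hg_sd : Measurable g_sd)
    (hindep : IndepFun g_rd g_sd μ)
    (π_rd π_sd : ℝ) (hπ_rd : 0 < π_rd) (hπ_sd : 0 < π_sd)
    (hlaw_rd : μ.map g_rd = expLaw π_rd)
    (hlaw_sd : μ.map g_sd = expLaw π_sd)
    (P_s P_r : ℝ) (hP_s : 0 < P_s) (hP_r : 0 < P_r)
    (C : ℝ) (hC : C ∈ Set.Ico (0 : ℝ) 1)
    (r : ℝ) (hr : 0 < r)
    (γ Q : ℝ) (hγ : γ = (2 : ℝ) ^ (2 * r) - 1)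
    (hQ : Q = Psi γ C / (P_r * π_rd * (1 - C ^ 2))) :
    (μ {ω | (P_r * g_rd ω + P_s * g_sd ω + 1) ^ 2 - (P_r * g_rd ω * C) ^ 2
          < (2 : ℝ) ^ (2 * r) * (P_s * g_sd ω + 1) ^ 2}).toReal
      = 1 - Real.exp (-Q) / (P_s * π_sd * Q + 1) := by
  obtain ⟨hC0, hC1⟩ := hC
  have hC2 : C ^ 2 < 1 := by nlinarith
  have hγ0 : 0 ≤ γ := by rw [hγ, sub_nonneg]; exact one_le_rpow one_le_two (by positivity)
  rw [show (2 : ℝ) ^ (2 * r) = 1 + γ by rw [hγ]; ring]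
  set S := {p : ℝ × ℝ | (P_r * p.1 + P_s * p.2 + 1) ^ 2 - (P_r * p.1 * C) ^ 2
    < (1 + γ) * (P_s * p.2 + 1) ^ 2}
  have hS : MeasurableSet S := measurableSet_lt (by fun_prop) (by fun_prop)
  have := isProbabilityMeasure_expMeasure (inv_pos.2 hπ_rd)
  have := isProbabilityMeasure_expMeasure (inv_pos.2 hπ_sd)
  have hlaw :
      μ.map (fun ω => (g_rd ω, g_sd ω)) = (expMeasure π_rd⁻¹).prod (expMeasure π_sd⁻¹) := by
    rw [(indepFun_iff_map_prod_eq_prod_map_map hg_rd.aemeasurable hg_sd.aemeasurable).mp hindep,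
      hlaw_rd, hlaw_sd, expLaw_eq_expMeasure, expLaw_eq_expMeasure]
  calc _ = ((expMeasure π_rd⁻¹).prod (expMeasure π_sd⁻¹)).real S := by
        rw [← hlaw, map_measureReal_apply (hg_rd.prodMk hg_sd) hS]; rfl
    _ = 1 - ((expMeasure π_rd⁻¹).prod (expMeasure π_sd⁻¹)).real Sᶜ := by
        rw [probReal_compl_eq_one_sub hS, _root_.sub_sub_cancel]
    _ = _ := by
        rw [prod_expMeasure_compl_sq_sub_sq_lt hπ_rd hπ_sd hP_r hP_s.le hC2 hγ0 hQ]
        field_simp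
        ring
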